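/- Let n ≥ 7, let Σ be the set of 3-element subsets of {1,…,n}, let α = {1,2,3}, and let B ≤ A_n be the subgroup of even permutations g with g(α) = α whose restrictions to α and to its complement are both even. Then B is transitive on each orbit of the setwise stabiliser A of α in A_n; explicitly, for all β, γ ∈ Σ with |β ∩ α| = |γ ∩ α|, there exists b ∈ B with b(β) = γ. -/

import Mathlib

/-!
A `3`-subset `β` splits as `(β ∩ α) ∪ (β \ α)`, and `|β ∩ α| = |γ ∩ α|` forces the two pieces of
`β` to have the sizes of those of `γ`. The alternating group of a set with at least three points
is transitive on its subsets of each size, so an even permutation of `α` carries `β ∩ α` to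
`γ ∩ α` and an even permutation of `αᶜ` (which has `n - 3 ≥ 4` points) carries `β \ α` to `γ \ α`.
-/

open Finset Equiv Equiv.Perm MulAction
open scoped Pointwise

theorem exists_mem_alternatingGroup_image_eq_of_subset {α : Type*} [Fintype α] [DecidableEq α]
    {C S T : Finset α} (hC : 3 ≤ #C) (hS : S ⊆ C) (hT : T ⊆ C) (hST : #S = #T) :
    ∃ g ∈ alternatingGroup α, (∀ x ∉ C, g x = x) ∧ S.image g = T := by
  have : IsPretransitive (alternatingGroup C) (Set.powersetCard C #S) :=
    Set.powersetCard.isPretransitive_alternatingGroup (by simpa)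
  obtain ⟨g, hg⟩ := exists_smul_eq (alternatingGroup C)
    (⟨S.subtype (· ∈ C), by simp [card_subtype, filter_true_of_mem hS]⟩ : Set.powersetCard C #S)
    ⟨T.subtype (· ∈ C), by simp [card_subtype, filter_true_of_mem hT, hST]⟩
  replace hg : g • S.subtype (· ∈ C) = T.subtype (· ∈ C) := congrArg Subtype.val hg
  refine ⟨ofSubtype (g : Perm C), by rw [mem_alternatingGroup, sign_ofSubtype]; exact g.2,
    fun x hx => ofSubtype_apply_of_not_mem _ hx, ?_⟩
  calc S.image (ofSubtype (g : Perm C))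
      = ((S.subtype (· ∈ C)).map (Function.Embedding.subtype _)).image
          (ofSubtype (g : Perm C)) := by
        rw [subtype_map_of_mem hS]
    _ = (g • S.subtype (· ∈ C)).map (Function.Embedding.subtype _) := by
        simp only [map_eq_image, image_image, smul_finset_def, Function.comp_def,
          Function.Embedding.coe_subtype, ofSubtype_apply_coe, Subgroup.smul_def, Perm.smul_def]
    _ = T := by rw [hg, subtype_map_of_mem hT]

theorem image_mul_eq_of_image_inter_eq_of_image_sdiff_eq {α : Type*} [DecidableEq α]
    {A β γ : Finset α} {h₁ h₂ : Perm α} (hh₁ : ∀ x ∉ A, h₁ x = x) (hh₂ : ∀ x ∈ A, h₂ x = x)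
    (hinter : (β ∩ A).image h₁ = γ ∩ A) (hsdiff : (β \ A).image h₂ = γ \ A) :
    β.image (h₁ * h₂) = γ := by
  have image_eq_self {f : Perm α} {s : Finset α} (hf : ∀ x ∈ s, f x = x) : s.image f = s := by
    rw [image_congr hf, image_id']
  calc β.image (h₁ * h₂)
      = ((β ∩ A).image h₂ ∪ (β \ A).image h₂).image h₁ := by
        rw [← image_union, show β ∩ A ∪ β \ A = β from sup_inf_sdiff β A, image_image]; rfl
    _ = (γ ∩ A) ∪ (γ \ A) := by
        rw [hsdiff, image_eq_self fun x hx => hh₂ x (mem_inter.1 hx).2, image_union, hinter,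
          image_eq_self fun x hx => hh₁ x (mem_sdiff.1 hx).2]
    _ = γ := sup_inf_sdiff γ A

/-- Let `n ≥ 7`, let `α = {0,1,2} ⊆ Fin n`, and let `B ≤ A_n` be the subgroup
of even permutations stabilising `α` whose restrictions to `α` and to its complement are both
even (described here as the products `h₁ * h₂` of even permutations with `h₁` fixing the
complement of `α` pointwise and `h₂` fixing `α` pointwise). Then `B` is transitive on each
orbit of the setwise stabiliser of `α` in `A_n` on the set `Σ` of 3-element subsets of `Fin n`:
explicitly, for all `β, γ ∈ Σ` with `|β ∩ α| = |γ ∩ α|`, there is `b ∈ B` with `b(β) = γ`. -/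
theorem alternating_three_subsets_transitive (n : ℕ) (hn : 7 ≤ n)
    (α : Finset (Fin n)) (hα : α = {⟨0, by omega⟩, ⟨1, by omega⟩, ⟨2, by omega⟩})
    (β γ : Finset (Fin n)) (hβ : β.card = 3) (hγ : γ.card = 3)
    (hβγ : (β ∩ α).card = (γ ∩ α).card) :
    ∃ b : Equiv.Perm (Fin n),
      (∃ h₁ h₂ : Equiv.Perm (Fin n), b = h₁ * h₂ ∧
        h₁ ∈ alternatingGroup (Fin n) ∧ h₂ ∈ alternatingGroup (Fin n) ∧
        (∀ x ∉ α, h₁ x = x) ∧ (∀ x ∈ α, h₂ x = x)) ∧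
      β.image b = γ := by
  have hα_card : #α = 3 := by simp [hα, card_insert_of_notMem, Fin.ext_iff]
  have hαc_card : 3 ≤ #αᶜ := by rw [card_compl, hα_card, Fintype.card_fin]; omega
  have hsdiff_card : #(β \ α) = #(γ \ α) := by
    have := card_inter_add_card_sdiff β α
    have := card_inter_add_card_sdiff γ α
    omega
  have sdiff_subset_compl (s : Finset (Fin n)) : s \ α ⊆ αᶜ := by
    rw [sdiff_eq_inter_compl]; exact inter_subset_right
  obtain ⟨h₁, hh₁_alt, hh₁_fix, hh₁_image⟩ := exists_mem_alternatingGroup_image_eq_of_subset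
    hα_card.ge inter_subset_right inter_subset_right hβγ
  obtain ⟨h₂, hh₂_alt, hh₂_fix, hh₂_image⟩ := exists_mem_alternatingGroup_image_eq_of_subset
    hαc_card (sdiff_subset_compl β) (sdiff_subset_compl γ) hsdiff_card
  have hh₂_fix' : ∀ x ∈ α, h₂ x = x := fun x hx => hh₂_fix x (notMem_compl.2 hx)
  exact ⟨h₁ * h₂, ⟨h₁, h₂, rfl, hh₁_alt, hh₂_alt, hh₁_fix, hh₂_fix'⟩,
    image_mul_eq_of_image_inter_eq_of_image_sdiff_eq hh₁_fix hh₂_fix' hh₁_image hh₂_image⟩
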